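/- Let d ≥ 2 be an integer and let x₀, x₁ be distinct integers. Then the closed triangle in ℝ² with vertices (0,0), (d,x₀), (d,x₁) contains a lattice point (a,b) ∈ ℤ² with 1 ≤ a ≤ d−1. -/

import Mathlib

/-!
Take `a = d - 1`. The slice of the triangle over `a` is the interval between `(d - 1) x₀ / d` and
`(d - 1) x₁ / d`, whose endpoints have denominator `d` and lie at distance at least `(d - 1) / d`,
so it contains an integer: for `m = min x₀ x₁`, `b = m - ⌊m / d⌋` satisfies
`d b = (d - 1) m + (m mod d)` and `m mod d ≤ d - 1 ≤ (d - 1) (max x₀ x₁ - m)`.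
-/

open Set

theorem smul_mem_convexHull_zero_insert {𝕜 E : Type*} [Ring 𝕜] [PartialOrder 𝕜]
    [IsOrderedRing 𝕜] [AddCommGroup E] [Module 𝕜 E] {p q z : E} {t : 𝕜}
    (ht : t ∈ Icc (0 : 𝕜) 1) (hz : z ∈ segment 𝕜 p q) :
    t • z ∈ convexHull 𝕜 {0, p, q} :=
  (convex_convexHull 𝕜 _).smul_mem_of_zero_mem (subset_convexHull 𝕜 _ (by simp))
    (segment_subset_convexHull (by simp) (by simp) hz) ht

theorem mk_mem_convexHull_triangle {d a y x₀ x₁ : ℝ} (ha : 0 < a) (had : a ≤ d)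
    (hy : d * y / a ∈ uIcc x₀ x₁) :
    (a, y) ∈ convexHull ℝ {(0, 0), (d, x₀), (d, x₁)} := by
  have hd : 0 < d := ha.trans_le had
  have hseg : (d, d * y / a) ∈ segment ℝ (d, x₀) (d, x₁) := by
    rw [← Prod.image_mk_segment_right, segment_eq_uIcc]
    exact mem_image_of_mem _ hy
  have hscale : (a, y) = (a / d) • (d, d * y / a) := by
    ext <;> simp only [Prod.smul_fst, Prod.smul_snd, smul_eq_mul] <;> field_simp
  rw [hscale]
  exact smul_mem_convexHull_zero_insert ⟨by positivity, (div_le_one hd).2 had⟩ hseg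

theorem Int.exists_mul_mem_Icc_pred_mul {d m n : ℤ} (hd : 0 < d) (hmn : m ≠ n) :
    ∃ b : ℤ, d * b ∈ Icc ((d - 1) * min m n) ((d - 1) * max m n) := by
  set k := min m n
  have hdiv : d * (k - k / d) = (d - 1) * k + k % d := by
    linear_combination -Int.mul_ediv_add_emod k d
  have hmod : k % d < d := Int.emod_lt_of_pos k hd
  have hgap : k + 1 ≤ max m n := by omega
  refine ⟨k - k / d, by rw [hdiv]; linarith [Int.emod_nonneg k hd.ne'], ?_⟩
  rw [hdiv]
  nlinarith

/-- For an integer `d ≥ 2` and distinct integers `x₀ x₁`, the closed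
triangle in `ℝ²` with vertices `(0,0)`, `(d,x₀)`, `(d,x₁)` contains a lattice
point `(a,b)` with `1 ≤ a ≤ d - 1`. -/
theorem stmt0 (d x₀ x₁ : ℤ) (hd : 2 ≤ d) (hx : x₀ ≠ x₁) :
    ∃ a b : ℤ, 1 ≤ a ∧ a ≤ d - 1 ∧
      ((a : ℝ), (b : ℝ)) ∈
        convexHull ℝ ({((0 : ℝ), (0 : ℝ)), ((d : ℝ), (x₀ : ℝ)), ((d : ℝ), (x₁ : ℝ))} :
          Set (ℝ × ℝ)) := by
  obtain ⟨b, hlo, hhi⟩ := Int.exists_mul_mem_Icc_pred_mul (by omega : 0 < d) hx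
  have hd1 : (0 : ℝ) < (d - 1 : ℤ) := by exact_mod_cast (by omega : (0 : ℤ) < d - 1)
  refine ⟨d - 1, b, by omega, le_rfl, mk_mem_convexHull_triangle hd1 (by push_cast; linarith) ?_⟩
  have hlo' : ((d - 1) * min x₀ x₁ : ℤ) ≤ (d * b : ℝ) := by exact_mod_cast hlo
  have hhi' : (d * b : ℝ) ≤ ((d - 1) * max x₀ x₁ : ℤ) := by exact_mod_cast hhi
  rw [uIcc, mem_Icc, le_div_iff₀ hd1, div_le_iff₀ hd1]
  push_cast at hlo' hhi' ⊢
  constructor <;> linarith
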